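/- arXiv:math/0312404 — 4 statements merged into one kernel-verified Lean document; each statement's English description precedes it below -/
import Mathlib

section
/- Let p be a degree 4 polynomial with four distinct real roots and ratio vector (u,v,w) (with σ_1 = u, σ_2 = v, σ_3 = w). Then 1/(4(1-u)) < v < 1/(4(1-u)w). -/
/-!
By Rolle's theorem each gap `(rᵢ, rᵢ₊₁)` contains a critical point, and since
`p' = 4 (X - x₁)(X - x₂)(X - x₃)` has no others, the critical points interlace the roots.
Evaluating the two factorisations of `p'` at `r₂` gives
`4 (r₂ - x₁)(x₂ - r₂)(x₃ - r₂) = (r₂ - r₁)(r₃ - r₂)(r₄ - r₂)`, that is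
`4 (1 - u) v = (r₄ - r₂) / (x₃ - r₂)`. This exceeds `1` because `x₃ < r₄`, and multiplied by
`w = (x₃ - r₃) / (r₄ - r₃)` it drops below `1` because
`(x₃ - r₂)(r₄ - r₃) - (r₄ - r₂)(x₃ - r₃) = (r₄ - x₃)(r₃ - r₂) > 0`.
-/

open Polynomial Finset

theorem eq_C_leadingCoeff_mul_prod_X_sub_C_of_card_eq_natDegree {R : Type*} [CommRing R]
    [IsDomain R] {f : R[X]} {s : Finset R} (hcard : #s = f.natDegree)
    (hroot : ∀ x ∈ s, f.eval x = 0) :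
    f = C f.leadingCoeff * ∏ x ∈ s, (X - C x) := by
  rcases eq_or_ne f 0 with rfl | hf
  · simp
  have hmonic : (∏ x ∈ s, (X - C x)).Monic := monic_prod_of_monic _ _ fun x _ => monic_X_sub_C x
  refine eq_of_degree_le_of_eval_finset_eq s ?_ ?_ ?_ ?_
  · rw [hcard]; exact degree_le_natDegree
  · rw [degree_C_mul (leadingCoeff_ne_zero.mpr hf), degree_prod, degree_eq_natDegree hf, ← hcard]
    simp
  · rw [leadingCoeff_mul, leadingCoeff_C, hmonic.leadingCoeff, mul_one]
  · intro x hx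
    rw [hroot x hx, eval_mul, eval_prod, prod_eq_zero hx (by simp), mul_zero]

theorem exists_eval_derivative_eq_zero_mem_Ioo {p : ℝ[X]} {a b : ℝ} (hab : a < b)
    (ha : p.eval a = 0) (hb : p.eval b = 0) : ∃ y ∈ Set.Ioo a b, p.derivative.eval y = 0 := by
  obtain ⟨y, hy, hy'⟩ := exists_deriv_eq_zero hab p.continuousOn (ha.trans hb.symm)
  exact ⟨y, hy, by rwa [p.deriv] at hy'⟩

section Quartic

variable {r₁ r₂ r₃ r₄ x₁ x₂ x₃ : ℝ} {p : ℝ[X]}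

theorem derivative_quartic_eq (hp : p = (X - C r₁) * (X - C r₂) * (X - C r₃) * (X - C r₄))
    (hx12 : x₁ < x₂) (hx23 : x₂ < x₃) (hc1 : p.derivative.eval x₁ = 0)
    (hc2 : p.derivative.eval x₂ = 0) (hc3 : p.derivative.eval x₃ = 0) :
    p.derivative = C 4 * ((X - C x₁) * (X - C x₂) * (X - C x₃)) := by
  have hmonic : p.Monic := by rw [hp]; monicity!
  have hdeg : p.natDegree = 4 := by rw [hp]; compute_degree!
  have hcard : #{x₁, x₂, x₃} = p.derivative.natDegree := by
    rw [natDegree_derivative, hdeg, card_eq_three]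
    exact ⟨x₁, x₂, x₃, hx12.ne, (hx12.trans hx23).ne, hx23.ne, rfl⟩
  have hcrit : ∀ x ∈ ({x₁, x₂, x₃} : Finset ℝ), p.derivative.eval x = 0 := by
    simp only [forall_mem_insert, mem_singleton, forall_eq]
    exact ⟨hc1, hc2, hc3⟩
  have hx₁ : x₁ ∉ ({x₂, x₃} : Finset ℝ) := by simp [hx12.ne, (hx12.trans hx23).ne]
  rw [eq_C_leadingCoeff_mul_prod_X_sub_C_of_card_eq_natDegree hcard hcrit,
    leadingCoeff_derivative, hmonic.leadingCoeff, hdeg, prod_insert hx₁, prod_pair hx23.ne]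
  norm_num
  ring

theorem quartic_critical_points_interlace
    (hp : p = (X - C r₁) * (X - C r₂) * (X - C r₃) * (X - C r₄))
    (hr12 : r₁ < r₂) (hr23 : r₂ < r₃) (hr34 : r₃ < r₄) (hx12 : x₁ < x₂) (hx23 : x₂ < x₃)
    (hc1 : p.derivative.eval x₁ = 0) (hc2 : p.derivative.eval x₂ = 0)
    (hc3 : p.derivative.eval x₃ = 0) :
    r₁ < x₁ ∧ x₁ < r₂ ∧ r₂ < x₂ ∧ x₂ < r₃ ∧ r₃ < x₃ ∧ x₃ < r₄ := by
  have hcrit : ∀ y, p.derivative.eval y = 0 → y = x₁ ∨ y = x₂ ∨ y = x₃ := by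
    intro y hy
    rw [derivative_quartic_eq hp hx12 hx23 hc1 hc2 hc3] at hy
    simpa [sub_eq_zero, or_assoc] using hy
  obtain ⟨y₁, ⟨h11, h12⟩, hy₁⟩ :=
    exists_eval_derivative_eq_zero_mem_Ioo (p := p) hr12 (by simp [hp]) (by simp [hp])
  obtain ⟨y₂, ⟨h21, h22⟩, hy₂⟩ :=
    exists_eval_derivative_eq_zero_mem_Ioo (p := p) hr23 (by simp [hp]) (by simp [hp])
  obtain ⟨y₃, ⟨h31, h32⟩, hy₃⟩ :=
    exists_eval_derivative_eq_zero_mem_Ioo (p := p) hr34 (by simp [hp]) (by simp [hp])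
  rcases hcrit y₁ hy₁ with rfl | rfl | rfl <;> rcases hcrit y₂ hy₂ with rfl | rfl | rfl <;>
    rcases hcrit y₃ hy₃ with rfl | rfl | rfl <;> refine ⟨?_, ?_, ?_, ?_, ?_, ?_⟩ <;> linarith

theorem eval_derivative_quartic_at_second_root
    (hp : p = (X - C r₁) * (X - C r₂) * (X - C r₃) * (X - C r₄)) :
    p.derivative.eval r₂ = (r₂ - r₁) * (r₂ - r₃) * (r₂ - r₄) := by
  rw [hp]
  simp only [derivative_mul, derivative_X_sub_C, eval_add, eval_mul, eval_sub, eval_X, eval_C,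
    eval_one]
  ring

end Quartic

theorem ratio_v_bounds (r₁ r₂ r₃ r₄ x₁ x₂ x₃ u v w : ℝ)
    (hr12 : r₁ < r₂) (hr23 : r₂ < r₃) (hr34 : r₃ < r₄)
    (hx12 : x₁ < x₂) (hx23 : x₂ < x₃)
    (p : Polynomial ℝ)
    (hp : p = (X - C r₁) * (X - C r₂) * (X - C r₃) * (X - C r₄))
    (hc1 : p.derivative.eval x₁ = 0) (hc2 : p.derivative.eval x₂ = 0)
    (hc3 : p.derivative.eval x₃ = 0)
    (hu : u = (x₁ - r₁) / (r₂ - r₁)) (hv : v = (x₂ - r₂) / (r₃ - r₂))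
    (hw : w = (x₃ - r₃) / (r₄ - r₃)) :
    1 / (4 * (1 - u)) < v ∧ v < 1 / (4 * (1 - u) * w) := by
  obtain ⟨-, hx₁, hx₂, -, hx₃, hx₃'⟩ :=
    quartic_critical_points_interlace hp hr12 hr23 hr34 hx12 hx23 hc1 hc2 hc3
  have hp' := eval_derivative_quartic_at_second_root hp
  rw [derivative_quartic_eq hp hx12 hx23 hc1 hc2 hc3] at hp'
  have hident : 4 * (r₂ - x₁) * (x₂ - r₂) * (x₃ - r₂) = (r₂ - r₁) * (r₃ - r₂) * (r₄ - r₂) := by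
    simp only [eval_mul, eval_C, eval_sub, eval_X] at hp'
    linear_combination hp'
  have hr₂r₁ : r₂ - r₁ ≠ 0 := (sub_pos.2 hr12).ne'
  have hr₃r₂ : r₃ - r₂ ≠ 0 := (sub_pos.2 hr23).ne'
  have hx₃r₂ : x₃ - r₂ ≠ 0 := (sub_pos.2 (hr23.trans hx₃)).ne'
  have h1u : 1 - u = (r₂ - x₁) / (r₂ - r₁) := by
    rw [hu]; field_simp; ring
  have hkey : 4 * (1 - u) * v = (r₄ - r₂) / (x₃ - r₂) := by
    rw [h1u, hv]; field_simp; linear_combination hident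
  have hu_pos : 0 < 1 - u := by rw [h1u]; exact div_pos (by linarith) (by linarith)
  have hw_pos : 0 < w := by rw [hw]; exact div_pos (by linarith) (by linarith)
  constructor
  · rw [div_lt_iff₀ (by positivity), mul_comm, hkey, one_lt_div (by linarith)]
    linarith
  · rw [lt_div_iff₀ (by positivity), ← mul_assoc, mul_comm v, hkey, hw, div_mul_div_comm,
      div_lt_one (mul_pos (by linarith) (by linarith))]
    nlinarith [mul_pos (sub_pos.2 hx₃') (sub_pos.2 hr23)]
end

section
/- Let p be a degree 4 polynomial with four distinct real roots and ratio vector (u,v,w). Then 1/(4(1-v)) < w < 1/(4(1-u)(1-v)). -/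
/-!
By Rolle's theorem each gap `(rᵢ, rᵢ₊₁)` contains a zero of `p'`, and `p' = 4 (X - x₁)(X - x₂)(X - x₃)`
has no others, so the critical points interlace the roots. Evaluating `p'` at the root `r₃` in two
ways gives `4 (r₃ - x₁)(r₃ - x₂)(r₃ - x₃) = (r₃ - r₁)(r₃ - r₂)(r₃ - r₄)`. With the gaps
`a = r₂ - r₁`, `b = r₃ - r₂`, `c = r₄ - r₃` this reads `4 w (1 - v) (b + (1 - u) a) = a + b`, and each
of the two bounds then amounts to `u > 0`.
-/

open Polynomial Set

namespace Polynomial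

theorem exists_mem_Ioo_isRoot_derivative {p : ℝ[X]} {a b : ℝ} (hab : a < b)
    (heq : p.eval a = p.eval b) : ∃ c ∈ Ioo a b, p.derivative.IsRoot c := by
  obtain ⟨c, hc, hdc⟩ := exists_deriv_eq_zero hab p.continuousOn heq
  exact ⟨c, hc, by rwa [IsRoot, ← p.deriv]⟩

theorem eq_C_leadingCoeff_mul_prod_of_isRoot {R : Type*} [CommRing R] [IsDomain R] {p : R[X]}
    (hp : p ≠ 0) {s : Finset R} (hs : ∀ x ∈ s, p.IsRoot x) (hcard : p.natDegree ≤ s.card) :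
    p = C p.leadingCoeff * ∏ x ∈ s, (X - C x) := by
  have hroots : p.roots = s.val :=
    (Multiset.eq_of_le_of_card_le ((Multiset.le_iff_subset s.nodup).2 fun x hx ↦
      (mem_roots hp).2 (hs x hx)) ((card_roots' p).trans hcard)).symm
  have hcard_roots : p.roots.card = p.natDegree :=
    le_antisymm (card_roots' p) (by rwa [hroots])
  rw [← C_leadingCoeff_mul_prod_multiset_X_sub_C hcard_roots, hroots, Finset.prod_eq_multiset_prod,
    leadingCoeff_mul, leadingCoeff_C, (monic_multisetProd_X_sub_C _).leadingCoeff, mul_one]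

theorem derivative_eq_C_natDegree_mul_prod {R : Type*} [CommRing R] [IsDomain R] [CharZero R]
    {p : R[X]} (hp : p.Monic) {s : Finset R} (hs : ∀ x ∈ s, p.derivative.IsRoot x)
    (hdeg : p.natDegree = s.card + 1) :
    p.derivative = C (p.natDegree : R) * ∏ x ∈ s, (X - C x) := by
  have hne : p.derivative ≠ 0 := derivative_ne_zero.2 (by omega)
  have hle : p.derivative.natDegree ≤ s.card := by rw [natDegree_derivative]; omega
  rw [eq_C_leadingCoeff_mul_prod_of_isRoot hne hs hle, leadingCoeff_derivative, hp.leadingCoeff,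
    one_mul]

end Polynomial

theorem eq_of_lt_of_mem_three {α : Type*} [LinearOrder α] {x₁ x₂ x₃ y₁ y₂ y₃ : α}
    (hx₁₂ : x₁ < x₂) (hx₂₃ : x₂ < x₃) (hy₁₂ : y₁ < y₂) (hy₂₃ : y₂ < y₃)
    (h₁ : y₁ = x₁ ∨ y₁ = x₂ ∨ y₁ = x₃) (h₂ : y₂ = x₁ ∨ y₂ = x₂ ∨ y₂ = x₃)
    (h₃ : y₃ = x₁ ∨ y₃ = x₂ ∨ y₃ = x₃) : y₁ = x₁ ∧ y₂ = x₂ ∧ y₃ = x₃ := by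
  rcases h₁ with rfl | rfl | rfl <;> rcases h₂ with rfl | rfl | rfl <;>
    rcases h₃ with rfl | rfl | rfl <;> first | exact ⟨rfl, rfl, rfl⟩ | (exfalso; order)

theorem eval_derivative_quartic {R : Type*} [CommRing R] [IsDomain R] [CharZero R]
    {r₁ r₂ r₃ r₄ x₁ x₂ x₃ : R} {p : R[X]}
    (hp : p = (X - C r₁) * (X - C r₂) * (X - C r₃) * (X - C r₄))
    (hx₁₂ : x₁ ≠ x₂) (hx₁₃ : x₁ ≠ x₃) (hx₂₃ : x₂ ≠ x₃) (hc₁ : p.derivative.IsRoot x₁)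
    (hc₂ : p.derivative.IsRoot x₂) (hc₃ : p.derivative.IsRoot x₃) (y : R) :
    p.derivative.eval y = 4 * ((y - x₁) * ((y - x₂) * (y - x₃))) := by
  classical
  have hmonic : p.Monic := by rw [hp]; monicity!
  have hdeg : p.natDegree = 4 := by rw [hp]; compute_degree!
  have hx₁ : x₁ ∉ ({x₂, x₃} : Finset R) := by simp [hx₁₂, hx₁₃]
  have hcard : p.natDegree = ({x₁, x₂, x₃} : Finset R).card + 1 := by
    rw [Finset.card_insert_of_notMem hx₁, Finset.card_pair hx₂₃, hdeg]
  rw [derivative_eq_C_natDegree_mul_prod hmonic (by simpa using ⟨hc₁, hc₂, hc₃⟩) hcard, hdeg,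
    Finset.prod_insert hx₁, Finset.prod_pair hx₂₃]
  simp

theorem quartic_critical_points_interlace_s4 {r₁ r₂ r₃ r₄ x₁ x₂ x₃ : ℝ} {p : ℝ[X]}
    (hp : p = (X - C r₁) * (X - C r₂) * (X - C r₃) * (X - C r₄))
    (hr₁₂ : r₁ < r₂) (hr₂₃ : r₂ < r₃) (hr₃₄ : r₃ < r₄) (hx₁₂ : x₁ < x₂) (hx₂₃ : x₂ < x₃)
    (hc₁ : p.derivative.IsRoot x₁) (hc₂ : p.derivative.IsRoot x₂)
    (hc₃ : p.derivative.IsRoot x₃) :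
    r₁ < x₁ ∧ x₁ < r₂ ∧ r₂ < x₂ ∧ x₂ < r₃ ∧ r₃ < x₃ ∧ x₃ < r₄ := by
  have hcrit (y : ℝ) (hy : p.derivative.IsRoot y) : y = x₁ ∨ y = x₂ ∨ y = x₃ := by
    simpa [eval_derivative_quartic hp hx₁₂.ne (hx₁₂.trans hx₂₃).ne hx₂₃.ne hc₁ hc₂ hc₃,
      sub_eq_zero] using hy
  have hrolle {a b : ℝ} (hab : a < b) (ha : p.IsRoot a) (hb : p.IsRoot b) :
      ∃ y ∈ Ioo a b, p.derivative.IsRoot y :=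
    exists_mem_Ioo_isRoot_derivative hab (ha.eq_zero.trans hb.eq_zero.symm)
  have hroot (r : ℝ) (hr : r = r₁ ∨ r = r₂ ∨ r = r₃ ∨ r = r₄) : p.IsRoot r := by
    rcases hr with rfl | rfl | rfl | rfl <;> simp [hp]
  obtain ⟨y₁, ⟨hr₁y₁, hy₁r₂⟩, hy₁⟩ := hrolle hr₁₂ (hroot r₁ (by simp)) (hroot r₂ (by simp))
  obtain ⟨y₂, ⟨hr₂y₂, hy₂r₃⟩, hy₂⟩ := hrolle hr₂₃ (hroot r₂ (by simp)) (hroot r₃ (by simp))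
  obtain ⟨y₃, ⟨hr₃y₃, hy₃r₄⟩, hy₃⟩ := hrolle hr₃₄ (hroot r₃ (by simp)) (hroot r₄ (by simp))
  obtain ⟨rfl, rfl, rfl⟩ := eq_of_lt_of_mem_three hx₁₂ hx₂₃ (hy₁r₂.trans hr₂y₂)
    (hy₂r₃.trans hr₃y₃) (hcrit y₁ hy₁) (hcrit y₂ hy₂) (hcrit y₃ hy₃)
  exact ⟨hr₁y₁, hy₁r₂, hr₂y₂, hy₂r₃, hr₃y₃, hy₃r₄⟩

theorem ratio_bounds_of_eq {a b c u v w : ℝ} (ha : 0 < a) (hb : 0 < b) (hc : 0 < c)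
    (hu₀ : 0 < u) (hu₁ : u < 1) (hv₁ : v < 1)
    (hkey : 4 * (b + (1 - u) * a) * ((1 - v) * b) * (w * c) = (a + b) * b * c) :
    1 / (4 * (1 - v)) < w ∧ w < 1 / (4 * (1 - u) * (1 - v)) := by
  set D := b + (1 - u) * a
  set k := 4 * (1 - v) * w
  have hD : 0 < D := by positivity
  have hkD : k * D = a + b := by
    apply mul_left_cancel₀ (mul_pos hb hc).ne'
    linear_combination hkey
  have hk_gt : 1 < k := by
    have h : (k - 1) * D = u * a := by linear_combination hkD
    have := (mul_pos_iff_of_pos_right hD).1 (h ▸ mul_pos hu₀ ha)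
    linarith
  have hk_lt : k * (1 - u) < 1 := by
    have h : (1 - k * (1 - u)) * D = u * b := by linear_combination (u - 1) * hkD
    have := (mul_pos_iff_of_pos_right hD).1 (h ▸ mul_pos hu₀ hb)
    linarith
  have h4v : 0 < 4 * (1 - v) := by linarith
  constructor
  · rw [div_lt_iff₀ h4v]; linarith
  · rw [lt_div_iff₀ (mul_pos (mul_pos four_pos (sub_pos.2 hu₁)) (sub_pos.2 hv₁))]; linarith

theorem ratio_w_bounds (r₁ r₂ r₃ r₄ x₁ x₂ x₃ u v w : ℝ)
    (hr12 : r₁ < r₂) (hr23 : r₂ < r₃) (hr34 : r₃ < r₄)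
    (hx12 : x₁ < x₂) (hx23 : x₂ < x₃)
    (p : Polynomial ℝ)
    (hp : p = (X - C r₁) * (X - C r₂) * (X - C r₃) * (X - C r₄))
    (hc1 : p.derivative.eval x₁ = 0) (hc2 : p.derivative.eval x₂ = 0)
    (hc3 : p.derivative.eval x₃ = 0)
    (hu : u = (x₁ - r₁) / (r₂ - r₁)) (hv : v = (x₂ - r₂) / (r₃ - r₂))
    (hw : w = (x₃ - r₃) / (r₄ - r₃)) :
    1 / (4 * (1 - v)) < w ∧ w < 1 / (4 * (1 - u) * (1 - v)) := by
  have hderiv := eval_derivative_quartic hp hx12.ne (hx12.trans hx23).ne hx23.ne hc1 hc2 hc3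
  obtain ⟨hr₁x₁, hx₁r₂, -, hx₂r₃, -, -⟩ :=
    quartic_critical_points_interlace_s4 hp hr12 hr23 hr34 hx12 hx23 hc1 hc2 hc3
  have hkey : 4 * ((r₃ - x₁) * ((r₃ - x₂) * (r₃ - x₃))) = (r₃ - r₁) * (r₃ - r₂) * (r₃ - r₄) := by
    rw [← hderiv, hp]
    simp [derivative_mul]
  have hu₀ : 0 < u := hu ▸ div_pos (sub_pos.2 hr₁x₁) (sub_pos.2 hr12)
  have hu₁ : u < 1 := hu ▸ (div_lt_one (sub_pos.2 hr12)).2 (by linarith)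
  have hv₁ : v < 1 := hv ▸ (div_lt_one (sub_pos.2 hr23)).2 (by linarith)
  have hx₁ : x₁ = r₁ + u * (r₂ - r₁) := by rw [hu, div_mul_cancel₀ _ (sub_ne_zero.2 hr12.ne')]; ring
  have hx₂ : x₂ = r₂ + v * (r₃ - r₂) := by rw [hv, div_mul_cancel₀ _ (sub_ne_zero.2 hr23.ne')]; ring
  have hx₃ : x₃ = r₃ + w * (r₄ - r₃) := by rw [hw, div_mul_cancel₀ _ (sub_ne_zero.2 hr34.ne')]; ring
  refine ratio_bounds_of_eq (sub_pos.2 hr12) (sub_pos.2 hr23) (sub_pos.2 hr34) hu₀ hu₁ hv₁ ?_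
  rw [hx₁, hx₂, hx₃] at hkey
  linear_combination -hkey
end

section
/- Let p be a degree 4 polynomial with four distinct real roots and ratio vector (u,v,w). Then w < 1/(2(1-u)), equivalently -1 + 2w - 2wu < 0. -/
open Polynomial

set_option maxHeartbeats 1000000 in
private lemma ratio_key_ineq (a b e Cv Dv : ℝ)
    (ha : 0 < a) (hb : 0 < b) (he : 0 < e) (hC : 0 < Cv) (hD : 0 < Dv)
    (e1 : b * (b + e) * (b + e + Cv + Dv)
      = a * ((b + e) * (b + e + Cv + Dv) + b * (b + e + Cv + Dv) + b * (b + e)))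
    (e3 : (a + b + e + Cv) * (e + Cv) * Cv
      = Dv * ((a + b + e + Cv) * (e + Cv) + (a + b + e + Cv) * Cv + (e + Cv) * Cv)) :
    2 * Cv * b < (Cv + Dv) * (a + b) := by
  have hba : a < b := by
    have hpos : (0:ℝ) < (b + e) * (b + e + Cv + Dv) := by positivity
    have h' : a * ((b + e) * (b + e + Cv + Dv)) < b * ((b + e) * (b + e + Cv + Dv)) := by
      nlinarith [mul_pos ha (show (0:ℝ) < b * (b + e + Cv + Dv) + b * (b + e) by positivity)]
    exact lt_of_mul_lt_mul_right h' hpos.le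
  have hDC : Dv < Cv := by
    have hpos : (0:ℝ) < (a + b + e + Cv) * (e + Cv) := by positivity
    have h' : Dv * ((a + b + e + Cv) * (e + Cv)) < Cv * ((a + b + e + Cv) * (e + Cv)) := by
      nlinarith [mul_pos hD (show (0:ℝ) < (a + b + e + Cv) * Cv + (e + Cv) * Cv by positivity)]
    exact lt_of_mul_lt_mul_right h' hpos.le
  have key : (50*e*Cv*Cv + 68*e*e*Cv + 18*e*e*e + 86*b*Cv*Cv + 186*b*e*Cv + 68*b*e*e
        + 86*b*b*Cv + 50*b*b*e + 13*a*e*Dv + 6*a*a*e) * ((Cv + Dv) * (a + b) - 2*Cv*b)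
      = (20*b*e*Cv*Cv*Cv + 56*b*e*e*Cv*Cv + 36*b*e*e*e*Cv + 13*b*b*e*Dv*Dv + 40*b*b*e*Cv*Cv
          + 56*b*b*e*e*Cv + 20*b*b*b*e*Cv + 13*a*a*e*Cv*Cv + 12*a*a*a*e*Cv)
        + (b - a) * (12*e*Cv*Dv*Dv + 13*e*e*Dv*Dv + 4*e*e*e*Dv + 24*b*e*e*Dv + 20*b*b*e*Dv)
        + (Cv - Dv) * (20*a*e*Cv*Cv + 24*a*e*e*Cv + 4*a*e*e*e + 13*a*a*e*e)
        + ((b - a) * (Cv - Dv)) * (12*e*Cv*Dv + 13*a*e*Dv + 12*a*b*e + 6*a*a*e) := by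
    linear_combination (-(43*Cv*Cv + 13*e*Dv + 27*e*Cv)) * e1 - (27*b*e + 43*b*b + 13*a*e) * e3
  have hσ : (0:ℝ) < 50*e*Cv*Cv + 68*e*e*Cv + 18*e*e*e + 86*b*Cv*Cv + 186*b*e*Cv + 68*b*e*e
      + 86*b*b*Cv + 50*b*b*e + 13*a*e*Dv + 6*a*a*e := by positivity
  have hN0 : (0:ℝ) < 20*b*e*Cv*Cv*Cv + 56*b*e*e*Cv*Cv + 36*b*e*e*e*Cv + 13*b*b*e*Dv*Dv
      + 40*b*b*e*Cv*Cv + 56*b*b*e*e*Cv + 20*b*b*b*e*Cv + 13*a*a*e*Cv*Cv + 12*a*a*a*e*Cv := by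
    positivity
  have hN1 : (0:ℝ) ≤ (b - a) * (12*e*Cv*Dv*Dv + 13*e*e*Dv*Dv + 4*e*e*e*Dv + 24*b*e*e*Dv
      + 20*b*b*e*Dv) := by
    apply mul_nonneg (by linarith only [hba])
    positivity
  have hN2 : (0:ℝ) ≤ (Cv - Dv) * (20*a*e*Cv*Cv + 24*a*e*e*Cv + 4*a*e*e*e + 13*a*a*e*e) := by
    apply mul_nonneg (by linarith only [hDC])
    positivity
  have hN3 : (0:ℝ) ≤ ((b - a) * (Cv - Dv)) * (12*e*Cv*Dv + 13*a*e*Dv + 12*a*b*e + 6*a*a*e) := by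
    apply mul_nonneg (mul_nonneg (by linarith only [hba]) (by linarith only [hDC]))
    positivity
  have hG : 0 < (Cv + Dv) * (a + b) - 2*Cv*b := by
    by_contra hcon
    push_neg at hcon
    nlinarith [mul_nonpos_of_nonneg_of_nonpos hσ.le hcon, key, hN0, hN1, hN2, hN3]
  linarith only [hG]

set_option maxHeartbeats 1000000 in
theorem ratio_w_upper (r₁ r₂ r₃ r₄ x₁ x₂ x₃ u v w : ℝ)
    (hr12 : r₁ < r₂) (hr23 : r₂ < r₃) (hr34 : r₃ < r₄)
    (hx12 : x₁ < x₂) (hx23 : x₂ < x₃)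
    (p : Polynomial ℝ)
    (hp : p = (X - C r₁) * (X - C r₂) * (X - C r₃) * (X - C r₄))
    (hc1 : p.derivative.eval x₁ = 0) (hc2 : p.derivative.eval x₂ = 0)
    (hc3 : p.derivative.eval x₃ = 0)
    (hu : u = (x₁ - r₁) / (r₂ - r₁)) (hv : v = (x₂ - r₂) / (r₃ - r₂))
    (hw : w = (x₃ - r₃) / (r₄ - r₃)) :
    w < 1 / (2 * (1 - u)) ∧ -1 + 2 * w - 2 * w * u < 0 := by
  -- degree facts
  have hpd4 : p.natDegree = 4 := by rw [hp]; compute_degree!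
  have hq0 : p.derivative ≠ 0 := by
    intro h
    have := Polynomial.natDegree_eq_zero_of_derivative_eq_zero h
    rw [hpd4] at this; exact absurd this (by norm_num)
  have hqdeg : p.derivative.natDegree ≤ 3 := by
    have := Polynomial.natDegree_derivative_le p
    rw [hpd4] at this; omega
  -- every root of p.derivative is one of x₁, x₂, x₃
  have hroots : ∀ y : ℝ, p.derivative.eval y = 0 → y = x₁ ∨ y = x₂ ∨ y = x₃ := by
    intro y hy
    by_contra hcon
    push_neg at hcon
    obtain ⟨hy1, hy2, hy3⟩ := hcon
    have hZ : ({y, x₁, x₂, x₃} : Finset ℝ).val ⊆ p.derivative.roots := by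
      intro z hz
      have hz' : z ∈ ({y, x₁, x₂, x₃} : Finset ℝ) := hz
      rw [Polynomial.mem_roots hq0]
      simp only [Finset.mem_insert, Finset.mem_singleton] at hz'
      rcases hz' with rfl | rfl | rfl | rfl <;> assumption
    have hle := Polynomial.card_le_degree_of_subset_roots hZ
    have hcard : ({y, x₁, x₂, x₃} : Finset ℝ).card = 4 := by
      rw [Finset.card_insert_of_notMem (by simp [hy1, hy2, hy3]),
        Finset.card_insert_of_notMem (by simp [hx12.ne, (hx12.trans hx23).ne]),
        Finset.card_insert_of_notMem (by simp [hx23.ne]), Finset.card_singleton]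
    rw [hcard] at hle
    omega
  -- Rolle
  have hrolle : ∀ s t : ℝ, s < t → p.eval s = 0 → p.eval t = 0 →
      ∃ z, z ∈ Set.Ioo s t ∧ p.derivative.eval z = 0 := by
    intro s t hst hs ht
    obtain ⟨z, hz, hz'⟩ := exists_deriv_eq_zero hst
      (Polynomial.continuous p).continuousOn (hs.trans ht.symm)
    refine ⟨z, hz, ?_⟩
    rw [← Polynomial.deriv]; exact hz'
  have hev1 : p.eval r₁ = 0 := by simp [hp]
  have hev2 : p.eval r₂ = 0 := by simp [hp]
  have hev3 : p.eval r₃ = 0 := by simp [hp]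
  have hev4 : p.eval r₄ = 0 := by simp [hp]
  obtain ⟨y₁, hy₁I, hy₁q⟩ := hrolle r₁ r₂ hr12 hev1 hev2
  obtain ⟨y₂, hy₂I, hy₂q⟩ := hrolle r₂ r₃ hr23 hev2 hev3
  obtain ⟨y₃, hy₃I, hy₃q⟩ := hrolle r₃ r₄ hr34 hev3 hev4
  obtain ⟨hy₁a, hy₁b⟩ := hy₁I
  obtain ⟨hy₂a, hy₂b⟩ := hy₂I
  obtain ⟨hy₃a, hy₃b⟩ := hy₃I
  have h1 := hroots y₁ hy₁q
  have h2 := hroots y₂ hy₂q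
  have h3 := hroots y₃ hy₃q
  clear hroots hrolle hy₁q hy₂q hy₃q hev1 hev2 hev3 hev4 hq0 hqdeg hpd4
  have hint : r₁ < x₁ ∧ x₁ < r₂ ∧ r₃ < x₃ ∧ x₃ < r₄ := by
    rcases h1 with rfl | rfl | rfl <;> rcases h2 with rfl | rfl | rfl <;>
      rcases h3 with rfl | rfl | rfl <;>
      exact ⟨by linarith, by linarith, by linarith, by linarith⟩
  obtain ⟨hi1, hi2, hi3, hi4⟩ := hint
  -- explicit derivative
  have hder : p.derivative =
      (X - C r₂) * (X - C r₃) * (X - C r₄) + (X - C r₁) * (X - C r₃) * (X - C r₄)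
      + (X - C r₁) * (X - C r₂) * (X - C r₄) + (X - C r₁) * (X - C r₂) * (X - C r₃) := by
    rw [hp]
    simp only [derivative_mul, derivative_sub, derivative_X, derivative_C, sub_zero,
      one_mul, mul_one]
    ring
  rw [hder] at hc1 hc3
  simp only [eval_add, eval_mul, eval_sub, eval_X, eval_C] at hc1 hc3
  clear hder hp hc2
  -- change of variables
  obtain ⟨a, rfl⟩ : ∃ a', x₁ = r₁ + a' := ⟨x₁ - r₁, by ring⟩
  obtain ⟨b, rfl⟩ : ∃ b', r₂ = r₁ + a + b' := ⟨r₂ - r₁ - a, by ring⟩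
  obtain ⟨e, rfl⟩ : ∃ e', r₃ = r₁ + a + b + e' := ⟨r₃ - r₁ - a - b, by ring⟩
  obtain ⟨Cv, rfl⟩ : ∃ c', x₃ = r₁ + a + b + e + c' := ⟨x₃ - r₁ - a - b - e, by ring⟩
  obtain ⟨Dv, rfl⟩ : ∃ d', r₄ = r₁ + a + b + e + Cv + d' := ⟨r₄ - r₁ - a - b - e - Cv, by ring⟩
  have ha : 0 < a := by linarith only [hi1]
  have hb : 0 < b := by linarith only [hi2]
  have he : 0 < e := by linarith only [hr23]
  have hC : 0 < Cv := by linarith only [hi3]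
  have hD : 0 < Dv := by linarith only [hi4]
  -- the two critical point equations
  have e1 : b * (b + e) * (b + e + Cv + Dv)
      = a * ((b + e) * (b + e + Cv + Dv) + b * (b + e + Cv + Dv) + b * (b + e)) := by
    linear_combination -hc1
  have e3 : (a + b + e + Cv) * (e + Cv) * Cv
      = Dv * ((a + b + e + Cv) * (e + Cv) + (a + b + e + Cv) * Cv + (e + Cv) * Cv) := by
    linear_combination hc3
  have hG := ratio_key_ineq a b e Cv Dv ha hb he hC hD e1 e3
  -- finish
  have hu' : u = a / (a + b) := by rw [hu]; ring_nf
  have hw' : w = Cv / (Cv + Dv) := by rw [hw]; ring_nf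
  have hab : 0 < a + b := by linarith only [ha, hb]
  have hCD : 0 < Cv + Dv := by linarith only [hC, hD]
  have hu1 : u < 1 := by rw [hu', div_lt_one hab]; linarith only [hb]
  have h2upos : 0 < 2 * (1 - u) := by linarith only [hu1]
  have hexp : w * (2 * (1 - u)) = (2 * Cv * b) / ((Cv + Dv) * (a + b)) := by
    rw [hw', hu']
    first
      | (field_simp [hab.ne', hCD.ne']; ring)
      | field_simp [hab.ne', hCD.ne']
  have hkey2 : w * (2 * (1 - u)) < 1 := by
    rw [hexp, div_lt_one (by positivity)]
    linarith only [hG]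
  have hring : -1 + 2 * w - 2 * w * u = w * (2 * (1 - u)) - 1 := by ring
  constructor
  · rw [lt_div_iff₀ h2upos]
    exact hkey2
  · rw [hring]
    linarith only [hkey2]
end

section
/- Suppose (u,v,w) satisfies R(u,v,w) = 0, lies in X_4 = (1/4,1/2)×(1/3,2/3)×(1/2,3/4), and satisfies -1 + 4v - 4uv > 0 and -4vw + 4uvw + 1 > 0. Then k(u,v,w) ≠ 0, where k(u,v,w) = 8u²v²w - 16uv²w + 8uvw + 8v²w - 2uv - 2uw - 8vw + 2u + 2v + 2w - 1. -/
noncomputable def Rpoly (u v w : ℝ) : ℝ :=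
  32 * u ^ 2 * v ^ 3 * w ^ 2 - 48 * u ^ 2 * v ^ 2 * w ^ 2 - 64 * u * v ^ 3 * w ^ 2 +
    24 * u ^ 2 * v ^ 2 * w + 16 * u ^ 2 * v * w ^ 2 + 120 * u * v ^ 2 * w ^ 2 +
    32 * v ^ 3 * w ^ 2 - 16 * u ^ 2 * v * w - 48 * u * v ^ 2 * w - 64 * u * v * w ^ 2 -
    72 * v ^ 2 * w ^ 2 + 52 * u * v * w + 8 * u * w ^ 2 + 24 * v ^ 2 * w +
    48 * v * w ^ 2 - 6 * u * v - 10 * u * w - 30 * v * w - 8 * w ^ 2 +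
    2 * u + 4 * v + 6 * w - 1

noncomputable def kpoly (u v w : ℝ) : ℝ :=
  8 * u ^ 2 * v ^ 2 * w - 16 * u * v ^ 2 * w + 8 * u * v * w + 8 * v ^ 2 * w -
    2 * u * v - 2 * u * w - 8 * v * w + 2 * u + 2 * v + 2 * w - 1

noncomputable def dpoly (u v w : ℝ) : ℝ :=
  -16 * u * v ^ 2 * w + 24 * u * v * w + 16 * v ^ 2 * w - 12 * u * v - 24 * v * w +
    8 * v + 4 * w - 1

theorem k_ne_zero (u v w : ℝ)
    (hR : Rpoly u v w = 0)
    (hu : 1 / 4 < u) (hu' : u < 1 / 2) (hv : 1 / 3 < v) (hv' : v < 2 / 3)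
    (hw : 1 / 2 < w) (hw' : w < 3 / 4)
    (h1 : -1 + 4 * v - 4 * u * v > 0) (h2 : -4 * v * w + 4 * u * v * w + 1 > 0) :
    kpoly u v w ≠ 0 := by
  intro hk
  have key : dpoly u v w * kpoly u v w =
      2 * v * (4 * u - 1) * (1 - w) * (1 - 2 * u) * (-4 * v * w + 4 * u * v * w + 1) +
      (-1 + 4 * v - 4 * u * v) * Rpoly u v w := by
    unfold dpoly kpoly Rpoly; ring
  rw [hk, hR, mul_zero, mul_zero, add_zero] at key
  nlinarith [mul_pos (mul_pos (mul_pos (mul_pos (by nlinarith : (0:ℝ) < 2 * v) (by nlinarith : (0:ℝ) < 4 * u - 1)) (by nlinarith : (0:ℝ) < 1 - w)) (by nlinarith : (0:ℝ) < 1 - 2 * u)) h2]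
end
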